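/- For all q ≥ 0 and under the assumption that every vertex has positive symmetrized degree, the normalized magnetic Laplacian L_N^(q) = I − (D_s^{−1/2} A_s D_s^{−1/2}) ⊙ exp(iΘ^(q)) is positive semidefinite. -/
import Mathlib


open Complex Matrix BigOperators

noncomputable section

/-- Phase matrix `Θ^(q)(u,v) = 2πq (A(u,v) − A(v,u))`. -/
def theta {N : ℕ} (A : Matrix (Fin N) (Fin N) ℝ) (q : ℝ) : Matrix (Fin N) (Fin N) ℝ :=
  Matrix.of fun u v => 2 * Real.pi * q * (A u v - A v u)

/-- Symmetrized adjacency matrix `A_s = (A + Aᵀ)/2`. -/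
def Asym {N : ℕ} (A : Matrix (Fin N) (Fin N) ℝ) : Matrix (Fin N) (Fin N) ℝ :=
  Matrix.of fun u v => (A u v + A v u) / 2

/-- Hermitian adjacency matrix `H^(q) = A_s ⊙ exp(iΘ^(q))` (entrywise). -/
def magH {N : ℕ} (A : Matrix (Fin N) (Fin N) ℝ) (q : ℝ) : Matrix (Fin N) (Fin N) ℂ :=
  Matrix.of fun u v => (Asym A u v : ℂ) * Complex.exp (Complex.I * (theta A q u v : ℂ))

/-- Symmetrized degree `d_s(u) = Σ_v A_s(u,v)`. -/
def degS {N : ℕ} (A : Matrix (Fin N) (Fin N) ℝ) (u : Fin N) : ℝ :=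
  ∑ v, Asym A u v

/-- Unnormalized magnetic Laplacian `L_U^(q) = D_s − H^(q)`. -/
def magLU {N : ℕ} (A : Matrix (Fin N) (Fin N) ℝ) (q : ℝ) : Matrix (Fin N) (Fin N) ℂ :=
  Matrix.diagonal (fun u => (degS A u : ℂ)) - magH A q

/-- Normalized magnetic Laplacian
`L_N^(q) = I − (D_s^{-1/2} A_s D_s^{-1/2}) ⊙ exp(iΘ^(q))`. -/
def magLN {N : ℕ} (A : Matrix (Fin N) (Fin N) ℝ) (q : ℝ) : Matrix (Fin N) (Fin N) ℂ :=
  1 - Matrix.of (fun u v =>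
    ((1 / Real.sqrt (degS A u) * Asym A u v * (1 / Real.sqrt (degS A v)) : ℝ) : ℂ) *
      Complex.exp (Complex.I * (theta A q u v : ℂ)))

theorem magLN_posSemidef {N : ℕ} (A : Matrix (Fin N) (Fin N) ℝ)
    (hA : ∀ u v, A u v = 0 ∨ A u v = 1)
    (hdeg : ∀ u, 0 < degS A u)
    (q : ℝ) (hq : 0 ≤ q) :
    ∀ x : Fin N → ℂ, (star x ⬝ᵥ (magLN A q *ᵥ x)).im = 0 ∧
      0 ≤ (star x ⬝ᵥ (magLN A q *ᵥ x)).re := by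
  intro x
  have hspos : ∀ u, 0 < Real.sqrt (degS A u) := fun u => Real.sqrt_pos.mpr (hdeg u)
  have hsne : ∀ u, ((Real.sqrt (degS A u) : ℝ) : ℂ) ≠ 0 :=
    fun u => Complex.ofReal_ne_zero.mpr (ne_of_gt (hspos u))
  have hss : ∀ u, ((Real.sqrt (degS A u) : ℝ) : ℂ) * ((Real.sqrt (degS A u) : ℝ) : ℂ)
      = (degS A u : ℂ) := fun u => by
    rw [← Complex.ofReal_mul, Real.mul_self_sqrt (hdeg u).le]
  set y : Fin N → ℂ := fun u => x u / ((Real.sqrt (degS A u) : ℝ) : ℂ) with hy_def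
  set e : Fin N → Fin N → ℂ := fun u v => Complex.exp (Complex.I * (theta A q u v : ℂ))
    with he_def
  set c : Fin N → Fin N → ℝ := fun u v => Asym A u v with hc_def
  have hcsymm : ∀ u v, c u v = c v u := fun u v => by
    simp only [hc_def, Asym, Matrix.of_apply]; ring
  have hcnn : ∀ u v, 0 ≤ c u v := fun u v => by
    simp only [hc_def, Asym, Matrix.of_apply]
    rcases hA u v with h | h <;> rcases hA v u with h' | h' <;> rw [h, h'] <;> norm_num
  have htheta : ∀ u v, theta A q v u = - theta A q u v := fun u v => by
    simp only [theta, Matrix.of_apply]; ring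
  have hesymm : ∀ u v, e v u = (starRingEnd ℂ) (e u v) := fun u v => by
    rw [he_def]
    simp only
    rw [← Complex.exp_conj, _root_.map_mul, Complex.conj_I, Complex.conj_ofReal, htheta u v]
    push_cast
    ring_nf
  have hee : ∀ u v, (starRingEnd ℂ) (e u v) * e u v = 1 := fun u v => by
    rw [← hesymm, he_def]
    simp only
    rw [← Complex.exp_add, ← Complex.exp_zero]
    congr 1
    rw [htheta]
    push_cast
    ring
  set S : ℝ := ∑ u, ∑ v, c u v * Complex.normSq (y u - e u v * y v) with hS_def
  have hSnn : 0 ≤ S := Finset.sum_nonneg fun u _ => Finset.sum_nonneg fun v _ =>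
    mul_nonneg (hcnn u v) (Complex.normSq_nonneg _)
  have stepA : (∑ u, ∑ v, (c u v : ℂ) * (y u * (starRingEnd ℂ) (y u)))
      = ∑ u, (starRingEnd ℂ) (x u) * x u := by
    refine Finset.sum_congr rfl fun u _ => ?_
    rw [← Finset.sum_mul]
    have hdc : (∑ v, (c u v : ℂ)) = (degS A u : ℂ) := by
      rw [degS]; push_cast; rfl
    rw [hdc, hy_def]
    simp only [map_div₀, Complex.conj_ofReal]
    rw [← hss u]
    field_simp [hsne u]
  have stepB : star x ⬝ᵥ (magLN A q *ᵥ x)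
      = (∑ u, (starRingEnd ℂ) (x u) * x u)
        - ∑ u, ∑ v, (c u v : ℂ) * (e u v * y v * (starRingEnd ℂ) (y u)) := by
    simp only [dotProduct, Matrix.mulVec, magLN, Matrix.sub_apply, Matrix.one_apply,
      Matrix.of_apply, Pi.star_apply, RCLike.star_def, sub_mul, mul_sub,
      Finset.sum_sub_distrib]
    congr 1
    · refine Finset.sum_congr rfl fun u _ => ?_
      simp [Finset.mul_sum, Finset.sum_ite_eq, mul_comm]
    · refine Finset.sum_congr rfl fun u _ => ?_
      rw [Finset.mul_sum]
      refine Finset.sum_congr rfl fun v _ => ?_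
      rw [hy_def]
      simp only [map_div₀, Complex.conj_ofReal, ← he_def, ← hc_def]
      push_cast
      field_simp
      ring
  have stepC : (S : ℂ)
      = 2 * ((∑ u, ∑ v, (c u v : ℂ) * (y u * (starRingEnd ℂ) (y u)))
          - ∑ u, ∑ v, (c u v : ℂ) * (e u v * y v * (starRingEnd ℂ) (y u))) := by
    rw [hS_def]
    push_cast
    have expand : ∀ u v : Fin N, (c u v : ℂ) * ((Complex.normSq (y u - e u v * y v) : ℝ) : ℂ)
        = (c u v : ℂ) * (y u * (starRingEnd ℂ) (y u))
          + (c u v : ℂ) * (y v * (starRingEnd ℂ) (y v))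
          - (c u v : ℂ) * (y u * (starRingEnd ℂ) (e u v) * (starRingEnd ℂ) (y v))
          - (c u v : ℂ) * (e u v * y v * (starRingEnd ℂ) (y u)) := by
      intro u v
      rw [← Complex.mul_conj]
      simp only [map_sub, _root_.map_mul]
      linear_combination (c u v : ℂ) * (y v * (starRingEnd ℂ) (y v)) * hee u v
    rw [Finset.sum_congr rfl fun u _ => Finset.sum_congr rfl fun v _ => expand u v]
    simp only [Finset.sum_sub_distrib, Finset.sum_add_distrib]
    have hT2 : (∑ u, ∑ v, (c u v : ℂ) * (y v * (starRingEnd ℂ) (y v)))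
        = ∑ u, ∑ v, (c u v : ℂ) * (y u * (starRingEnd ℂ) (y u)) := by
      rw [Finset.sum_comm]
      exact Finset.sum_congr rfl fun a _ => Finset.sum_congr rfl fun b _ => by
        rw [hcsymm b a]
    have hT3 : (∑ u, ∑ v, (c u v : ℂ) * (y u * (starRingEnd ℂ) (e u v) * (starRingEnd ℂ) (y v)))
        = ∑ u, ∑ v, (c u v : ℂ) * (e u v * y v * (starRingEnd ℂ) (y u)) := by
      rw [Finset.sum_comm]
      refine Finset.sum_congr rfl fun a _ => Finset.sum_congr rfl fun b _ => ?_
      rw [hcsymm b a, hesymm a b, Complex.conj_conj]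
      ring
    rw [hT2, hT3]
    ring
  have key : star x ⬝ᵥ (magLN A q *ᵥ x) = ((S / 2 : ℝ) : ℂ) := by
    rw [stepB, ← stepA, Complex.ofReal_div, stepC]
    push_cast
    ring
  rw [key]
  refine ⟨Complex.ofReal_im _, ?_⟩
  rw [Complex.ofReal_re]
  linarith


end
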